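/- arXiv:2301.11226 — 5 statements merged into one kernel-verified Lean document; each statement's English description precedes it below -/
import Mathlib

section
/- Assume N ≥ 3 and let m := #{(k,q) : 1 ≤ k ≤ q ≤ K}. For a parameter θ = (β, u) with β > 0 and u ∈ (0,∞)^{N×K}, define the joint density f_θ on ℕ^Ω × [0,∞)^m by f_θ(A, (w_{kq})_{k≤q}) := (∏_{e∈Ω} Pois(A_e; λ_e(u,w)/κ_e)) · ∏_{k≤q} β e^{−β w_{kq}}, where w is the symmetric K×K matrix determined by the upper-triangular entries (w_{kq})_{k≤q}. If θ₀ = (β₀, u₀) and θ₁ = (β₁, u₁) are two such parameters with θ₀ ≠ θ₁, then f_{θ₀} and f_{θ₁} differ on a set of positive measure with respect to the product of counting measure on ℕ^Ω and Lebesgue measure on [0,∞)^m. -/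
open MeasureTheory

/-- The bilinear interaction `u_i^T w u_j = Σ_{k,q} u_{ik} w_{kq} u_{jq}`. -/
noncomputable def bilin {N K : ℕ} (u : Fin N → Fin K → ℝ) (w : Fin K → Fin K → ℝ)
    (i j : Fin N) : ℝ :=
  ∑ k, ∑ q, u i k * w k q * u j q

/-- The Poisson mean of a hyperedge: `λ_e(u,w) = Σ_{i<j ∈ e} u_i^T w u_j`. -/
noncomputable def lam {N K : ℕ} (u : Fin N → Fin K → ℝ) (w : Fin K → Fin K → ℝ)
    (e : Finset (Fin N)) : ℝ :=
  ∑ i ∈ e, ∑ j ∈ e, if i < j then bilin u w i j else 0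

/-- Poisson probability mass: `Pois(a; λ) = λ^a e^{-λ} / a!`. -/
noncomputable def pois (a : ℕ) (l : ℝ) : ℝ := l ^ a * Real.exp (-l) / (Nat.factorial a : ℝ)

/-- The symmetric `K×K` matrix determined by its upper-triangular entries. -/
noncomputable def symOfUpper {K : ℕ} (v : {p : Fin K × Fin K // p.1 ≤ p.2} → ℝ) :
    Fin K → Fin K → ℝ :=
  fun k q => if h : k ≤ q then v ⟨(k, q), h⟩ else v ⟨(q, k), le_of_not_ge h⟩

/-- The half-Bayesian joint density on `ℕ^Ω × [0,∞)^m` for parameter `θ = (β, u)`: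
`f_θ(A, (w_{kq})_{k≤q}) = (∏_{e∈Ω} Pois(A_e; λ_e(u,w)/κ_e)) · ∏_{k≤q} β e^{−β w_{kq}}`. -/
noncomputable def halfBayesDensity {N K D : ℕ} (κ : ℕ → ℝ) (β : ℝ)
    (u : Fin N → Fin K → ℝ)
    (x : ({e : Finset (Fin N) // 2 ≤ e.card ∧ e.card ≤ D} → ℕ) ×
         ({p : Fin K × Fin K // p.1 ≤ p.2} → ℝ)) : ℝ :=
  (∏ e : {e : Finset (Fin N) // 2 ≤ e.card ∧ e.card ≤ D},
      pois (x.1 e) (lam u (symOfUpper x.2) e.1 / κ e.1.card))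
    * ∏ p : {p : Fin K × Fin K // p.1 ≤ p.2}, β * Real.exp (-β * x.2 p)

/-!
The densities are continuous in `w`, so almost-everywhere equality on each slice `A = const`
upgrades to equality on the whole closed orthant `w ≥ 0`. At `A = 0`, `w = 0` the density is
`β ^ m`, which pins down `β`. The density at `A = 𝟙_e` is `λ_e(u, w) / κ_e` times the density at
`A = 0`, so the two parameters give the same `λ_e`. Taking `e = {i, j}` and `w = E_kk` shows
that the products `u_ik u_jk` agree for all `i ≠ j`; with a third node `l`, positivity and
`u_ik² = (u_ik u_jk)(u_ik u_lk) / (u_jk u_lk)` recover `u_ik` itself.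
-/

open Finset

lemma pois_one (l : ℝ) : pois 1 l = l * pois 0 l := by simp [pois]

lemma prod_pois_single {ι : Type*} [Fintype ι] [DecidableEq ι] (i : ι) (l : ι → ℝ) :
    ∏ j, pois ((Pi.single i 1 : ι → ℕ) j) (l j) = l i * ∏ j, pois 0 (l j) := by
  rw [Fintype.prod_eq_mul_prod_compl i, Fintype.prod_eq_mul_prod_compl i (fun j => pois 0 (l j)),
    Pi.single_eq_same, pois_one, mul_assoc]
  congr 2
  refine prod_congr rfl fun j hj => ?_
  rw [Pi.single_eq_of_ne (by simpa using hj)]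

@[fun_prop]
lemma continuous_symOfUpper_apply {K : ℕ} (k q : Fin K) :
    Continuous fun v : {p : Fin K × Fin K // p.1 ≤ p.2} → ℝ => symOfUpper v k q := by
  unfold symOfUpper
  split_ifs <;> exact continuous_apply _

@[fun_prop]
lemma continuous_lam_symOfUpper {N K : ℕ} (u : Fin N → Fin K → ℝ) (e : Finset (Fin N)) :
    Continuous fun v : {p : Fin K × Fin K // p.1 ≤ p.2} → ℝ => lam u (symOfUpper v) e := by
  refine continuous_finsetSum _ fun i _ => continuous_finsetSum _ fun j _ => ?_
  split_ifs
  · unfold bilin; fun_prop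
  · exact continuous_const

section density

variable {N K D : ℕ} (κ : ℕ → ℝ) (β : ℝ) (u : Fin N → Fin K → ℝ)

lemma continuous_halfBayesDensity_prodMk_left
    (A : {e : Finset (Fin N) // 2 ≤ e.card ∧ e.card ≤ D} → ℕ) :
    Continuous fun v => halfBayesDensity (D := D) κ β u (A, v) := by
  simp only [halfBayesDensity, pois]
  fun_prop

lemma halfBayesDensity_zero_pos (hβ : 0 < β) (v : {p : Fin K × Fin K // p.1 ≤ p.2} → ℝ) :
    0 < halfBayesDensity (D := D) κ β u (0, v) := by
  unfold halfBayesDensity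
  exact mul_pos (prod_pos fun e _ => by simp [pois, Real.exp_pos])
    (prod_pos fun p _ => mul_pos hβ (Real.exp_pos _))

lemma halfBayesDensity_single (e : {e : Finset (Fin N) // 2 ≤ e.card ∧ e.card ≤ D})
    (v : {p : Fin K × Fin K // p.1 ≤ p.2} → ℝ) :
    halfBayesDensity κ β u (Pi.single e 1, v)
      = lam u (symOfUpper v) e.1 / κ e.1.card * halfBayesDensity (D := D) κ β u (0, v) := by
  simp only [halfBayesDensity, prod_pois_single, Pi.zero_apply, mul_assoc]

lemma halfBayesDensity_zero_zero :
    halfBayesDensity (D := D) κ β u (0, 0)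
      = β ^ Fintype.card {p : Fin K × Fin K // p.1 ≤ p.2} := by
  simp [halfBayesDensity, symOfUpper, lam, bilin, pois]

end density

lemma lam_pair {N K : ℕ} (u : Fin N → Fin K → ℝ) (w : Fin K → Fin K → ℝ) {i j : Fin N}
    (hij : i < j) : lam u w {i, j} = bilin u w i j := by
  simp [lam, sum_pair hij.ne, hij, hij.not_gt]

lemma symOfUpper_single_diag {K : ℕ} (k k' q' : Fin K) :
    symOfUpper (Pi.single ⟨(k, k), le_rfl⟩ 1) k' q' = if k' = k ∧ q' = k then 1 else 0 := by
  unfold symOfUpper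
  split_ifs <;> simp_all [Pi.single_apply, Subtype.ext_iff, Prod.ext_iff]; omega

lemma bilin_symOfUpper_single_diag {N K : ℕ} (u : Fin N → Fin K → ℝ) (k : Fin K) (i j : Fin N) :
    bilin u (symOfUpper (Pi.single ⟨(k, k), le_rfl⟩ 1)) i j = u i k * u j k := by
  simp [bilin, symOfUpper_single_diag, ite_and]

lemma ae_eq_slice_of_ae_eq_count_prod {α β γ : Type*} [MeasurableSpace α] [MeasurableSpace β]
    {μ : Measure β} [SFinite μ] {f g : α × β → γ} (h : f =ᵐ[Measure.count.prod μ] g) (a : α) :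
    (fun b => f (a, b)) =ᵐ[μ] fun b => g (a, b) :=
  Measure.ae_count_iff.1 (Measure.ae_ae_of_ae_prod h) a

lemma nonneg_orthant_subset_closure_interior {ι : Type*} [Finite ι] :
    {v : ι → ℝ | ∀ p, 0 ≤ v p} ⊆ closure (interior {v | ∀ p, 0 ≤ v p}) := by
  have : {v : ι → ℝ | ∀ p, 0 ≤ v p} = Set.univ.pi fun _ => Set.Ici 0 := by ext; simp [Pi.le_def]
  rw [this, interior_pi_set Set.finite_univ, closure_pi_set]
  simp

lemma eq_of_mul_eq_mul_of_pos {a b c a' b' c' : ℝ} (ha : 0 < a) (ha' : 0 < a') (hb : 0 < b)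
    (hc : 0 < c) (hab : a * b = a' * b') (hac : a * c = a' * c') (hbc : b * c = b' * c') :
    a = a' := by
  have hsq : a ^ 2 * (b * c) = a' ^ 2 * (b * c) := by
    linear_combination (a * c) * hab + (a' * b') * hac - a' ^ 2 * hbc
  rwa [mul_left_inj' (mul_pos hb hc).ne', pow_left_inj₀ ha.le ha'.le two_ne_zero] at hsq

lemma eq_of_forall_ne_mul_eq_mul {α : Type*} [Fintype α] (hα : 3 ≤ Fintype.card α)
    {f g : α → ℝ} (hf : ∀ i, 0 < f i) (hg : ∀ i, 0 < g i)
    (h : ∀ i j, i ≠ j → f i * f j = g i * g j) : f = g := by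
  classical
  funext i
  obtain ⟨j, hj, l, hl, hjl⟩ := (one_lt_card (s := univ.erase i)).1 (by
    rw [card_erase_of_mem (mem_univ i), card_univ]; omega)
  rw [mem_erase] at hj hl
  exact eq_of_mul_eq_mul_of_pos (hf i) (hg i) (hf j) (hf l) (h i j hj.1.symm) (h i l hl.1.symm)
    (h j l hjl)

theorem stmt_1_general {N K D : ℕ} (hN : 3 ≤ N) (hK : 1 ≤ K) (hD2 : 2 ≤ D)
    (κ : ℕ → ℝ) (hκ : ∀ n, 2 ≤ n → n ≤ D → 0 < κ n)
    (β₀ β₁ : ℝ) (hβ₀ : 0 < β₀) (hβ₁ : 0 < β₁)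
    (u₀ u₁ : Fin N → Fin K → ℝ)
    (hu₀ : ∀ i k, 0 < u₀ i k) (hu₁ : ∀ i k, 0 < u₁ i k)
    (hθ : (β₀, u₀) ≠ (β₁, u₁)) :
    ¬ (halfBayesDensity (N := N) (K := K) (D := D) κ β₀ u₀
        =ᵐ[(Measure.count :
              Measure ({e : Finset (Fin N) // 2 ≤ e.card ∧ e.card ≤ D} → ℕ)).prod
            ((volume : Measure ({p : Fin K × Fin K // p.1 ≤ p.2} → ℝ)).restrict
              {v | ∀ p, 0 ≤ v p})]
      halfBayesDensity (N := N) (K := K) (D := D) κ β₁ u₁) := by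
  intro hae
  have hdens (A) : Set.EqOn (fun v => halfBayesDensity κ β₀ u₀ (A, v))
      (fun v => halfBayesDensity κ β₁ u₁ (A, v)) {v | ∀ p, 0 ≤ v p} :=
    Measure.eqOn_of_ae_eq (ae_eq_slice_of_ae_eq_count_prod hae A)
      (continuous_halfBayesDensity_prodMk_left κ β₀ u₀ A).continuousOn
      (continuous_halfBayesDensity_prodMk_left κ β₁ u₁ A).continuousOn
      nonneg_orthant_subset_closure_interior
  have hβ : β₀ = β₁ := by
    have h := hdens 0 (le_refl (0 : {p : Fin K × Fin K // p.1 ≤ p.2} → ℝ))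
    have hm : Fintype.card {p : Fin K × Fin K // p.1 ≤ p.2} ≠ 0 :=
      (Fintype.card_pos_iff.2 ⟨⟨(⟨0, hK⟩, ⟨0, hK⟩), le_rfl⟩⟩).ne'
    simpa only [halfBayesDensity_zero_zero, pow_left_inj₀ hβ₀.le hβ₁.le hm] using h
  have hlam (e : {e : Finset (Fin N) // 2 ≤ e.card ∧ e.card ≤ D}) (v) (hv : 0 ≤ v) :
      lam u₀ (symOfUpper v) e.1 = lam u₁ (symOfUpper v) e.1 := by
    have h := hdens (Pi.single e 1) hv
    simp only [halfBayesDensity_single, hdens 0 hv] at h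
    rwa [mul_left_inj' (halfBayesDensity_zero_pos κ β₁ u₁ hβ₁ v).ne',
      div_left_inj' (hκ _ e.2.1 e.2.2).ne'] at h
  have hpair (k : Fin K) (i j : Fin N) (hij : i ≠ j) : u₀ i k * u₀ j k = u₁ i k * u₁ j k := by
    wlog hlt : i < j generalizing i j
    · linear_combination this j i hij.symm (hij.lt_or_gt.resolve_left hlt)
    have h := hlam ⟨{i, j}, by rw [card_pair hij]; exact ⟨le_rfl, hD2⟩⟩
      (Pi.single ⟨(k, k), le_rfl⟩ 1) (Pi.single_nonneg.2 zero_le_one)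
    simpa only [lam_pair _ _ hlt, bilin_symOfUpper_single_diag] using h
  have hu : u₀ = u₁ := by
    ext i k
    exact congrFun (eq_of_forall_ne_mul_eq_mul (by simpa using hN) (hu₀ · k) (hu₁ · k) (hpair k)) i
  exact hθ (Prod.ext hβ hu)

/-- Identifiability of the half-Bayesian model: if `N ≥ 3` and `(β₀,u₀) ≠ (β₁,u₁)`
(with `β` positive rates and `u` entrywise positive), then the joint densities
`f_{θ₀}` and `f_{θ₁}` differ on a set of positive measure with respect to the product
of counting measure on `ℕ^Ω` and Lebesgue measure on `[0,∞)^m`. -/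
theorem stmt_1 {N K D : ℕ} (hN : 3 ≤ N) (hK : 1 ≤ K) (hD2 : 2 ≤ D) (hDN : D ≤ N)
    (κ : ℕ → ℝ) (hκ : ∀ n, 2 ≤ n → n ≤ D → 0 < κ n)
    (β₀ β₁ : ℝ) (hβ₀ : 0 < β₀) (hβ₁ : 0 < β₁)
    (u₀ u₁ : Fin N → Fin K → ℝ)
    (hu₀ : ∀ i k, 0 < u₀ i k) (hu₁ : ∀ i k, 0 < u₁ i k)
    (hθ : (β₀, u₀) ≠ (β₁, u₁)) :
    ¬ (halfBayesDensity (N := N) (K := K) (D := D) κ β₀ u₀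
        =ᵐ[(Measure.count :
              Measure ({e : Finset (Fin N) // 2 ≤ e.card ∧ e.card ≤ D} → ℕ)).prod
            ((volume : Measure ({p : Fin K × Fin K // p.1 ≤ p.2} → ℝ)).restrict
              {v | ∀ p, 0 ≤ v p})]
      halfBayesDensity (N := N) (K := K) (D := D) κ β₁ u₁) :=
  stmt_1_general hN hK hD2 κ hκ β₀ β₁ hβ₀ hβ₁ u₀ u₁ hu₀ hu₁ hθ
end

section
/- Suppose N ≥ 3 and let u⁰, u¹ ∈ (0,∞)^{N×K} with u⁰ ≠ u¹. Then there exist a K×K matrix w̃ with nonnegative entries and a hyperedge ẽ ⊆ V with |ẽ| = 2 such that λ_{ẽ}(u⁰, w̃) ≠ λ_{ẽ}(u¹, w̃). -/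
lemma bilin_single {N K : ℕ} (u : Fin N → Fin K → ℝ) (k : Fin K) (i j : Fin N) :
    bilin u (fun k' q' => if k' = k ∧ q' = k then 1 else 0) i j = u i k * u j k := by
  unfold bilin
  rw [Finset.sum_eq_single k]
  · rw [Finset.sum_eq_single k]
    · simp
    · intro q _ hq; simp [hq]
    · simp
  · intro k' _ hk'
    simp [hk']
  · simp

lemma lam_pair_s2 {N K : ℕ} (u : Fin N → Fin K → ℝ) (k : Fin K) {x y : Fin N} (hxy : x ≠ y) :
    lam u (fun k' q' => if k' = k ∧ q' = k then 1 else 0) {x, y} = u x k * u y k := by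
  unfold lam
  rw [Finset.sum_pair hxy, Finset.sum_pair hxy, Finset.sum_pair hxy]
  rcases lt_or_gt_of_ne hxy with h | h
  · simp [h, not_lt.mpr h.le, lt_irrefl, bilin_single]
  · simp [h, not_lt.mpr h.le, lt_irrefl, bilin_single, mul_comm]

/-- If `N ≥ 3` and `u⁰ ≠ u¹` are entrywise strictly positive membership matrices,
then there exist a nonnegative affinity matrix `w̃` and a hyperedge `ẽ` of size 2
with `λ_{ẽ}(u⁰, w̃) ≠ λ_{ẽ}(u¹, w̃)`. -/
theorem stmt_2 {N K : ℕ} (hN : 3 ≤ N) (hK : 1 ≤ K)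
    (u0 u1 : Fin N → Fin K → ℝ)
    (hu0 : ∀ i k, 0 < u0 i k) (hu1 : ∀ i k, 0 < u1 i k) (hne : u0 ≠ u1) :
    ∃ w : Fin K → Fin K → ℝ, (∀ k q, 0 ≤ w k q) ∧
      ∃ e : Finset (Fin N), e.card = 2 ∧ lam u0 w e ≠ lam u1 w e := by
  -- find a coordinate where u0 and u1 differ
  obtain ⟨i, k, hik⟩ : ∃ i k, u0 i k ≠ u1 i k := by
    by_contra h
    push_neg at h
    exact hne (funext fun i => funext fun k => h i k)
  set w : Fin K → Fin K → ℝ := fun k' q' => if k' = k ∧ q' = k then 1 else 0 with hw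
  refine ⟨w, fun k' q' => by positivity, ?_⟩
  by_contra h
  push_neg at h
  have key : ∀ x y : Fin N, x ≠ y → u0 x k * u0 y k = u1 x k * u1 y k := by
    intro x y hxy
    have hcard : ({x, y} : Finset (Fin N)).card = 2 := Finset.card_pair hxy
    have := h {x, y} hcard
    rwa [lam_pair_s2 u0 k hxy, lam_pair_s2 u1 k hxy] at this
  -- pick two other distinct nodes
  obtain ⟨a, b, hab, ha, hb⟩ : ∃ a b : Fin N, a ≠ b ∧ a ≠ i ∧ b ≠ i := by
    have h2 : 1 < (Finset.univ.erase i).card := by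
      rw [Finset.card_erase_of_mem (Finset.mem_univ i), Finset.card_univ, Fintype.card_fin]
      omega
    obtain ⟨a, ha, b, hb, hab⟩ := Finset.one_lt_card.mp h2
    exact ⟨a, b, hab, Finset.ne_of_mem_erase ha, Finset.ne_of_mem_erase hb⟩
  have h1 := key i a (Ne.symm ha)
  have h2 := key i b (Ne.symm hb)
  have h3 := key a b hab
  have p0i := hu0 i k; have p0a := hu0 a k; have p0b := hu0 b k
  have p1i := hu1 i k; have p1a := hu1 a k; have p1b := hu1 b k
  have hX : (0:ℝ) < u0 a k * u0 b k := mul_pos p0a p0b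
  have hsq : u0 i k ^ 2 = u1 i k ^ 2 := by
    have hmul : u0 i k ^ 2 * (u0 a k * u0 b k) = u1 i k ^ 2 * (u0 a k * u0 b k) := by
      calc u0 i k ^ 2 * (u0 a k * u0 b k)
          = (u0 i k * u0 a k) * (u0 i k * u0 b k) := by ring
        _ = (u1 i k * u1 a k) * (u1 i k * u1 b k) := by rw [h1, h2]
        _ = u1 i k ^ 2 * (u1 a k * u1 b k) := by ring
        _ = u1 i k ^ 2 * (u0 a k * u0 b k) := by rw [h3]
    exact mul_right_cancel₀ hX.ne' hmul
  have hfac : (u0 i k - u1 i k) * (u0 i k + u1 i k) = 0 := by linear_combination hsq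
  rcases mul_eq_zero.mp hfac with h' | h'
  · exact hik (by linarith)
  · linarith
end

section
/- Let w be a symmetric K×K real matrix and u ∈ ℝ^{N×K}. For every node i ∈ V, Σ_{e ⊆ V : i ∈ e, 2 ≤ |e| ≤ D} (1/κ_{|e|}) λ_e(u,w) = C · u_i^T w (Σ_{j ∈ V, j ≠ i} u_j) + C' · Σ_{j<m ∈ V : j,m ≠ i} u_j^T w u_m, where C := Σ_{d=2}^D (1/κ_d) binom(N−2, d−2) and C' := Σ_{d=3}^D (1/κ_d) binom(N−3, d−3). (Since the expected weight of hyperedge e under the model is λ_e/κ_e, the left-hand side is the expected weighted degree 𝔼[d_i^w] of node i.) -/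
/-!
Removing `i` from a hyperedge `e ∋ i` splits `λ_e` into the interactions `u_iᵀ w u_j`,
`j ∈ e ∖ {i}`, plus `λ_{e ∖ {i}}` (this is where the symmetry of `w` enters). Exchanging the sum
over hyperedges with the sum over nodes `j ≠ i`, resp. pairs `j < m` avoiding `i`, each interaction
gets the weight `Σ 1/κ_{|e|}` over the admissible `e ⊇ {i, j}`, resp. `e ⊇ {i, j, m}`. Of these,
exactly `binom(N-2, d-2)`, resp. `binom(N-3, d-3)`, have size `d`, which gives `C` and `C'`.
-/

open Finset

section Supersets

variable {α : Type*} [Fintype α] [DecidableEq α]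

theorem card_supersets_of_card (s : Finset α) {d : ℕ} (hd : #s ≤ d) :
    #{e : Finset α | s ⊆ e ∧ #e = d} = (Fintype.card α - #s).choose (d - #s) := by
  rw [← card_compl, ← card_powersetCard]
  refine card_nbij' (· \ s) (· ∪ s) (fun e he => ?_) (fun t ht => ?_) (fun e he => ?_)
    (fun t ht => ?_)
  · obtain ⟨hse, rfl⟩ := (mem_filter.1 he).2
    exact mem_powersetCard.2
      ⟨subset_compl_iff_disjoint_right.2 disjoint_sdiff_self_left, card_sdiff_of_subset hse⟩
  · obtain ⟨hts, htcard⟩ := mem_powersetCard.1 ht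
    have hdisj := subset_compl_iff_disjoint_right.1 hts
    exact mem_filter.2
      ⟨mem_univ _, subset_union_right, by rw [card_union_of_disjoint hdisj]; omega⟩
  · exact sdiff_union_of_subset (mem_filter.1 he).2.1
  · exact union_sdiff_cancel_right (subset_compl_iff_disjoint_right.1 (mem_powersetCard.1 ht).1)

theorem sum_supersets_card_Icc {R : Type*} [NonAssocSemiring R] (s : Finset α) (f : ℕ → R)
    {a b : ℕ} (ha : a ≤ #s) :
    ∑ e with s ⊆ e ∧ a ≤ #e ∧ #e ≤ b, f #e
      = ∑ d ∈ Icc #s b, f d * (Fintype.card α - #s).choose (d - #s) := by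
  rw [← sum_fiberwise_of_maps_to (g := card) (t := Icc #s b) fun e he => by
    obtain ⟨hse, -, heb⟩ := (mem_filter.1 he).2
    exact mem_Icc.2 ⟨card_le_card hse, heb⟩]
  refine sum_congr rfl fun d hd => ?_
  obtain ⟨hsd, hdb⟩ := mem_Icc.1 hd
  have hfiber (e : Finset α) : (s ⊆ e ∧ a ≤ #e ∧ #e ≤ b) ∧ #e = d ↔ s ⊆ e ∧ #e = d := by
    constructor
    · rintro ⟨⟨hse, -⟩, hed⟩
      exact ⟨hse, hed⟩
    · rintro ⟨hse, rfl⟩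
      exact ⟨⟨hse, ha.trans hsd, hdb⟩, rfl⟩
  rw [filter_filter, filter_congr fun e _ => hfiber e, ← card_supersets_of_card s hsd,
    ← nsmul_eq_mul', ← sum_const]
  exact sum_congr rfl fun e he => by rw [(mem_filter.1 he).2.2]

theorem sum_mul_sum_filter_comm {β ι R : Type*} [NonUnitalCommSemiring R] (F : Finset β)
    (T : Finset ι) (r : ι → β → Prop) [∀ x e, Decidable (r x e)] (c : β → R) (φ : ι → R) :
    ∑ e ∈ F, c e * ∑ x ∈ T with r x e, φ x = ∑ x ∈ T, φ x * ∑ e ∈ F with r x e, c e := by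
  simp only [mul_sum, sum_filter, mul_ite, mul_zero]
  rw [sum_comm]
  exact sum_congr rfl fun x _ => sum_congr rfl fun e _ => by rw [mul_comm]

theorem sum_hyperedges_filter_superset {R : Type*} [NonAssocSemiring R] (f : ℕ → R) (D : ℕ)
    {i : α} {s : Finset α} (his : i ∉ s) (hs : 1 ≤ #s) :
    ∑ e ∈ {e : Finset α | i ∈ e ∧ 2 ≤ #e ∧ #e ≤ D} with s ⊆ e, f #e
      = ∑ d ∈ Icc (#s + 1) D, f d * (Fintype.card α - (#s + 1)).choose (d - (#s + 1)) := by
  have hcond (e : Finset α) :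
      (i ∈ e ∧ 2 ≤ #e ∧ #e ≤ D) ∧ s ⊆ e ↔ insert i s ⊆ e ∧ 2 ≤ #e ∧ #e ≤ D := by
    rw [insert_subset_iff]
    tauto
  rw [filter_filter, filter_congr fun e _ => hcond e,
    sum_supersets_card_Icc _ _ (by rw [card_insert_of_notMem his]; omega),
    card_insert_of_notMem his]

end Supersets

section Hyperedges

variable {N K : ℕ} (u : Fin N → Fin K → ℝ) (w : Fin K → Fin K → ℝ)

theorem bilin_comm (hw : ∀ k q, w k q = w q k) (i j : Fin N) :
    bilin u w i j = bilin u w j i := by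
  unfold bilin
  rw [sum_comm]
  exact sum_congr rfl fun k _ => sum_congr rfl fun q _ => by rw [hw q k]; ring

theorem sum_bilin_eq (i : Fin N) (t : Finset (Fin N)) :
    ∑ j ∈ t, bilin u w i j = ∑ k, ∑ q, u i k * w k q * ∑ j ∈ t, u j q := by
  simp only [bilin, mul_sum]
  rw [sum_comm]
  exact sum_congr rfl fun k _ => sum_comm

theorem lam_insert (hw : ∀ k q, w k q = w q k) {i : Fin N} {s : Finset (Fin N)} (hi : i ∉ s) :
    lam u w (insert i s) = ∑ j ∈ s, bilin u w i j + lam u w s := by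
  have hpair : ∀ j ∈ s,
      ((if i < j then bilin u w i j else 0) + if j < i then bilin u w j i else 0)
        = bilin u w i j := by
    intro j hj
    rcases lt_or_gt_of_ne (ne_of_mem_of_not_mem hj hi).symm with h | h
    · simp [h, h.not_gt]
    · simp [h, h.not_gt, bilin_comm u w hw j i]
  simp only [lam, sum_insert hi, lt_irrefl, if_false, zero_add, sum_add_distrib]
  rw [← sum_congr rfl hpair, sum_add_distrib]
  ring

theorem lam_eq_sum_pairs (s : Finset (Fin N)) :
    lam u w s = ∑ p ∈ s ×ˢ s with p.1 < p.2, bilin u w p.1 p.2 := by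
  rw [sum_filter, sum_product]
  rfl

theorem sum_hyperedges_mul_sum_bilin (f : ℕ → ℝ) (D : ℕ) (i : Fin N) :
    ∑ e ∈ {e : Finset (Fin N) | i ∈ e ∧ 2 ≤ #e ∧ #e ≤ D}, f #e * ∑ j ∈ e.erase i, bilin u w i j
      = (∑ d ∈ Icc 2 D, f d * (N - 2).choose (d - 2)) * ∑ j ∈ univ.erase i, bilin u w i j := by
  have herase (e : Finset (Fin N)) : e.erase i = {j ∈ univ.erase i | {j} ⊆ e} := by
    ext j
    simp only [mem_erase, mem_filter, mem_univ, singleton_subset_iff]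
    tauto
  refine (sum_congr rfl fun e _ => by rw [herase e]).trans ?_
  rw [sum_mul_sum_filter_comm, mul_sum]
  refine sum_congr rfl fun j hj => ?_
  rw [sum_hyperedges_filter_superset f D (by simpa [eq_comm] using hj) (by simp),
    card_singleton, Fintype.card_fin, mul_comm]

theorem sum_hyperedges_mul_lam_erase (f : ℕ → ℝ) (D : ℕ) (i : Fin N) :
    ∑ e ∈ {e : Finset (Fin N) | i ∈ e ∧ 2 ≤ #e ∧ #e ≤ D}, f #e * lam u w (e.erase i)
      = (∑ d ∈ Icc 3 D, f d * (N - 3).choose (d - 3)) * lam u w (univ.erase i) := by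
  have herase (e : Finset (Fin N)) : lam u w (e.erase i)
      = ∑ p ∈ {p ∈ univ.erase i ×ˢ univ.erase i | p.1 < p.2} with {p.1, p.2} ⊆ e,
          bilin u w p.1 p.2 := by
    rw [lam_eq_sum_pairs, filter_filter]
    congr 1
    ext p
    simp only [mem_filter, mem_product, mem_erase, mem_univ, insert_subset_iff,
      singleton_subset_iff]
    tauto
  refine (sum_congr rfl fun e _ => by rw [herase e]).trans ?_
  rw [sum_mul_sum_filter_comm, lam_eq_sum_pairs, mul_sum]
  refine sum_congr rfl fun p hp => ?_
  obtain ⟨hp, hlt⟩ := mem_filter.1 hp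
  obtain ⟨hp1, hp2⟩ := mem_product.1 hp
  rw [sum_hyperedges_filter_superset f D (by simp_all [eq_comm]) (by simp),
    card_pair hlt.ne, Fintype.card_fin, mul_comm]

end Hyperedges

theorem stmt_8_general {N K D : ℕ} (κ : ℕ → ℝ)
    (u : Fin N → Fin K → ℝ) (w : Fin K → Fin K → ℝ) (hw : ∀ k q, w k q = w q k)
    (i : Fin N) :
    ∑ e ∈ Finset.univ.filter
        (fun e : Finset (Fin N) => i ∈ e ∧ 2 ≤ e.card ∧ e.card ≤ D),
        (1 / κ e.card) * lam u w e
      = (∑ d ∈ Finset.Icc 2 D, (1 / κ d) * ((N - 2).choose (d - 2) : ℝ))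
          * (∑ k, ∑ q, u i k * w k q * ∑ j ∈ Finset.univ.erase i, u j q)
        + (∑ d ∈ Finset.Icc 3 D, (1 / κ d) * ((N - 3).choose (d - 3) : ℝ))
            * lam u w (Finset.univ.erase i) := by
  have hsplit (e : Finset (Fin N)) (hie : i ∈ e) :
      lam u w e = ∑ j ∈ e.erase i, bilin u w i j + lam u w (e.erase i) := by
    rw [← lam_insert u w hw (notMem_erase i e), insert_erase hie]
  calc _ = ∑ e ∈ {e : Finset (Fin N) | i ∈ e ∧ 2 ≤ #e ∧ #e ≤ D},
          (1 / κ #e * ∑ j ∈ e.erase i, bilin u w i j + 1 / κ #e * lam u w (e.erase i)) :=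
        sum_congr rfl fun e he => by rw [hsplit e (mem_filter.1 he).2.1, mul_add]
    _ = _ := by
      rw [sum_add_distrib, sum_hyperedges_mul_sum_bilin u w (fun n => 1 / κ n),
        sum_hyperedges_mul_lam_erase u w (fun n => 1 / κ n), sum_bilin_eq]

/-- Expected weighted degree of node `i`:
`Σ_{e ∋ i, 2 ≤ |e| ≤ D} λ_e(u,w)/κ_{|e|}
  = C · u_i^T w (Σ_{j≠i} u_j) + C' · Σ_{j<m, j,m≠i} u_j^T w u_m`, where
`C = Σ_{d=2}^D (1/κ_d) binom(N−2,d−2)` and `C' = Σ_{d=3}^D (1/κ_d) binom(N−3,d−3)`. -/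
theorem stmt_8 {N K D : ℕ} (hN : 2 ≤ N) (hK : 1 ≤ K) (hD2 : 2 ≤ D) (hDN : D ≤ N)
    (κ : ℕ → ℝ) (hκ : ∀ n, 2 ≤ n → n ≤ D → 0 < κ n)
    (u : Fin N → Fin K → ℝ) (w : Fin K → Fin K → ℝ) (hw : ∀ k q, w k q = w q k)
    (i : Fin N) :
    ∑ e ∈ Finset.univ.filter
        (fun e : Finset (Fin N) => i ∈ e ∧ 2 ≤ e.card ∧ e.card ≤ D),
        (1 / κ e.card) * lam u w e
      = (∑ d ∈ Finset.Icc 2 D, (1 / κ d) * ((N - 2).choose (d - 2) : ℝ))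
          * (∑ k, ∑ q, u i k * w k q * ∑ j ∈ Finset.univ.erase i, u j q)
        + (∑ d ∈ Finset.Icc 3 D, (1 / κ d) * ((N - 3).choose (d - 3) : ℝ))
            * lam u w (Finset.univ.erase i) :=
  stmt_8_general κ u w hw i
end

section
/- Fix u ∈ (0,∞)^{N×K}, a finite set E of hyperedges with weights A_e ∈ ℕ, a constant C > 0, and for each e ∈ E strictly positive reals ρ^{(e)}_{ijkq} (indexed by i<j ∈ e and k,q ∈ {1,…,K}) summing to 1. For a K×K matrix w with strictly positive entries (its entries treated as independent variables), the partial derivative of 𝓛(u,w,ρ) with respect to w_{kq} equals −C Σ_{i<j ∈ V} u_{ik} u_{jq} + (1/w_{kq}) Σ_{e∈E} A_e ρ^{(e)}_{kq}, where ρ^{(e)}_{kq} := Σ_{i<j∈e} ρ^{(e)}_{ijkq}. Consequently, this partial derivative vanishes if and only if w_{kq} = ( Σ_{e∈E} A_e ρ^{(e)}_{kq} ) / ( C Σ_{i<j ∈ V} u_{ik} u_{jq} ), which is the EM update for w (assuming the denominator is nonzero). -/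
/-- The variational objective
`𝓛(u,w,ρ) = −C Σ_{i<j∈V} u_i^T w u_j
  + Σ_{e∈E} A_e Σ_{i<j∈e} Σ_{k,q} ρ^{(e)}_{ijkq} log(u_{ik} u_{jq} w_{kq}/ρ^{(e)}_{ijkq})`. -/
noncomputable def Lfun {N K : ℕ} (C : ℝ) (E : Finset (Finset (Fin N)))
    (A : Finset (Fin N) → ℕ)
    (ρ : Finset (Fin N) → Fin N → Fin N → Fin K → Fin K → ℝ)
    (u : Fin N → Fin K → ℝ) (w : Fin K → Fin K → ℝ) : ℝ :=
  -C * (∑ i : Fin N, ∑ j : Fin N, if i < j then bilin u w i j else 0)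
    + ∑ e ∈ E, (A e : ℝ) *
        ∑ i ∈ e, ∑ j ∈ e, if i < j then
          ∑ k, ∑ q, ρ e i j k q * Real.log (u i k * u j q * w k q / ρ e i j k q)
        else 0

/-- `ρ^{(e)}_{kq} = Σ_{i<j∈e} ρ^{(e)}_{ijkq}`. -/
noncomputable def rhoKQ {N K : ℕ}
    (ρ : Finset (Fin N) → Fin N → Fin N → Fin K → Fin K → ℝ)
    (e : Finset (Fin N)) (k q : Fin K) : ℝ :=
  ∑ i ∈ e, ∑ j ∈ e, if i < j then ρ e i j k q else 0

/-! Only the summands of `𝓛` that contain `w_{kq}` depend on `t`. Each bilinear one is linear in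
`t` with slope `u_{ik} u_{jq}`, each entropy one is `ρ log (c t / ρ)` with derivative `ρ / t`.
Setting the derivative to zero is then a linear equation in `1 / w_{kq}`. -/

open Finset Function

section PartialDerivative

variable {ι κ : Type*} [DecidableEq ι] [DecidableEq κ]

theorem update_update_apply (w : ι → κ → ℝ) (k : ι) (q : κ) (t : ℝ) (k' : ι) (q' : κ) :
    update w k (update (w k) q t) k' q' = if k' = k ∧ q' = q then t else w k' q' := by
  by_cases hk : k' = k
  · subst hk
    by_cases hq : q' = q <;> simp [hq]
  · simp [hk]

theorem hasDerivAt_sum_sum_update [Fintype ι] [Fintype κ] (g : ι → κ → ℝ → ℝ)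
    (w : ι → κ → ℝ) (k : ι) (q : κ) {g' : ℝ} (hg : HasDerivAt (g k q) g' (w k q)) :
    HasDerivAt (fun t => ∑ k', ∑ q', g k' q' (update w k (update (w k) q t) k' q'))
      g' (w k q) := by
  have hterm : ∀ k' q', HasDerivAt (fun t => g k' q' (update w k (update (w k) q t) k' q'))
      (if k' = k ∧ q' = q then g' else 0) (w k q) := by
    intro k' q'
    simp only [update_update_apply]
    by_cases h : k' = k ∧ q' = q
    · obtain ⟨rfl, rfl⟩ := h
      simpa using hg
    · simpa [h] using hasDerivAt_const (w k q) (g k' q' (w k' q'))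
  have hsum := HasDerivAt.fun_sum (u := univ) fun k' _ =>
    HasDerivAt.fun_sum (u := univ) fun q' _ => hterm k' q'
  simpa [ite_and] using hsum

end PartialDerivative

theorem HasDerivAt.ite_zero {f : ℝ → ℝ} {f' x : ℝ} (p : Prop) [Decidable p]
    (hf : p → HasDerivAt f f' x) :
    HasDerivAt (fun t => if p then f t else 0) (if p then f' else 0) x := by
  split_ifs with hp
  · exact hf hp
  · exact hasDerivAt_const x 0

/-- For `ρ = 0` the function is identically `0 * log 0 = 0`. -/
theorem hasDerivAt_mul_log_mul_div (ρ : ℝ) {c t : ℝ} (hc : c ≠ 0) (ht : t ≠ 0) :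
    HasDerivAt (fun s => ρ * Real.log (c * s / ρ)) (ρ / t) t := by
  rcases eq_or_ne ρ 0 with rfl | hρ
  · simpa using hasDerivAt_const t (0 : ℝ)
  have hlin : HasDerivAt (fun s => c * s / ρ) (c / ρ) t := by
    simpa using ((hasDerivAt_id t).const_mul c).div_const ρ
  refine ((hlin.log (by positivity)).const_mul ρ).congr_deriv ?_
  field_simp

theorem neg_add_one_div_mul_eq_zero_iff {a b x : ℝ} (ha : a ≠ 0) (hx : x ≠ 0) :
    -a + 1 / x * b = 0 ↔ x = b / a := by
  rw [eq_div_iff ha, neg_add_eq_zero, one_div, eq_comm, inv_mul_eq_iff_eq_mul₀ hx, mul_comm]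
  exact eq_comm

theorem hasDerivAt_Lfun_update {N K : ℕ} (C : ℝ) (E : Finset (Finset (Fin N)))
    (A : Finset (Fin N) → ℕ) (ρ : Finset (Fin N) → Fin N → Fin N → Fin K → Fin K → ℝ)
    (u : Fin N → Fin K → ℝ) (hu : ∀ i k, u i k ≠ 0) (w : Fin K → Fin K → ℝ) (k q : Fin K)
    (hw : w k q ≠ 0) :
    HasDerivAt (fun t => Lfun C E A ρ u (update w k (update (w k) q t)))
      (-C * (∑ i : Fin N, ∑ j : Fin N, if i < j then u i k * u j q else 0)
        + (1 / w k q) * ∑ e ∈ E, (A e : ℝ) * rhoKQ ρ e k q)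
      (w k q) := by
  have hbilin : ∀ i j, HasDerivAt (fun t => bilin u (update w k (update (w k) q t)) i j)
      (u i k * u j q) (w k q) := fun i j =>
    hasDerivAt_sum_sum_update (fun k' q' x => u i k' * x * u j q') w k q
      (by simpa using ((hasDerivAt_id (w k q)).const_mul (u i k)).mul_const (u j q))
  have hlog : ∀ e i j, HasDerivAt (fun t => ∑ k', ∑ q', ρ e i j k' q' *
        Real.log (u i k' * u j q' * update w k (update (w k) q t) k' q' / ρ e i j k' q'))
      (ρ e i j k q / w k q) (w k q) := fun e i j =>
    hasDerivAt_sum_sum_update (fun k' q' x => ρ e i j k' q' *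
        Real.log (u i k' * u j q' * x / ρ e i j k' q')) w k q
      (hasDerivAt_mul_log_mul_div _ (mul_ne_zero (hu i k) (hu j q)) hw)
  have hpairs := HasDerivAt.fun_sum (u := univ) fun i _ => HasDerivAt.fun_sum (u := univ)
    fun j _ => HasDerivAt.ite_zero (i < j) fun _ => hbilin i j
  have hedges := HasDerivAt.fun_sum (u := E) fun e _ => (HasDerivAt.fun_sum (u := e)
    fun i _ => HasDerivAt.fun_sum (u := e)
      fun j _ => HasDerivAt.ite_zero (i < j) fun _ => hlog e i j).const_mul (A e : ℝ)
  refine ((hpairs.const_mul (-C)).add hedges).congr_deriv ?_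
  simp only [rhoKQ, mul_sum, mul_ite, mul_zero, div_eq_inv_mul, mul_one, mul_left_comm]

theorem stmt_13_general {N K : ℕ} (C : ℝ)
    (E : Finset (Finset (Fin N)))
    (A : Finset (Fin N) → ℕ)
    (u : Fin N → Fin K → ℝ) (hu : ∀ i k, 0 < u i k)
    (ρ : Finset (Fin N) → Fin N → Fin N → Fin K → Fin K → ℝ)
    (w : Fin K → Fin K → ℝ) (hw : ∀ k q, 0 < w k q)
    (k q : Fin K) :
    HasDerivAt
      (fun t : ℝ => Lfun C E A ρ u (Function.update w k (Function.update (w k) q t)))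
      (-C * (∑ i : Fin N, ∑ j : Fin N, if i < j then u i k * u j q else 0)
        + (1 / w k q) * ∑ e ∈ E, (A e : ℝ) * rhoKQ ρ e k q)
      (w k q) ∧
    (C * (∑ i : Fin N, ∑ j : Fin N, if i < j then u i k * u j q else 0) ≠ 0 →
      ((-C * (∑ i : Fin N, ∑ j : Fin N, if i < j then u i k * u j q else 0)
          + (1 / w k q) * ∑ e ∈ E, (A e : ℝ) * rhoKQ ρ e k q) = 0 ↔
        w k q = (∑ e ∈ E, (A e : ℝ) * rhoKQ ρ e k q)
          / (C * ∑ i : Fin N, ∑ j : Fin N, if i < j then u i k * u j q else 0))) := by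
  refine ⟨hasDerivAt_Lfun_update C E A ρ u (fun i k => (hu i k).ne') w k q (hw k q).ne',
    fun hden => ?_⟩
  rw [neg_mul]
  exact neg_add_one_div_mul_eq_zero_iff hden (hw k q).ne'

/-- The partial derivative of `𝓛` with respect to `w_{kq}` (entries treated as
independent variables) equals `−C Σ_{i<j∈V} u_{ik} u_{jq} + (1/w_{kq}) Σ_e A_e ρ^{(e)}_{kq}`;
consequently it vanishes iff `w_{kq}` equals the EM update (when the denominator is
nonzero). -/
theorem stmt_13 {N K : ℕ} (C : ℝ) (hC : 0 < C)
    (E : Finset (Finset (Fin N))) (hE : ∀ e ∈ E, 2 ≤ e.card)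
    (A : Finset (Fin N) → ℕ)
    (u : Fin N → Fin K → ℝ) (hu : ∀ i k, 0 < u i k)
    (ρ : Finset (Fin N) → Fin N → Fin N → Fin K → Fin K → ℝ)
    (hρpos : ∀ e ∈ E, ∀ i ∈ e, ∀ j ∈ e, i < j → ∀ k q, 0 < ρ e i j k q)
    (hρsum : ∀ e ∈ E,
      (∑ i ∈ e, ∑ j ∈ e, if i < j then ∑ k, ∑ q, ρ e i j k q else 0) = 1)
    (w : Fin K → Fin K → ℝ) (hw : ∀ k q, 0 < w k q)
    (k q : Fin K) :
    HasDerivAt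
      (fun t : ℝ => Lfun C E A ρ u (Function.update w k (Function.update (w k) q t)))
      (-C * (∑ i : Fin N, ∑ j : Fin N, if i < j then u i k * u j q else 0)
        + (1 / w k q) * ∑ e ∈ E, (A e : ℝ) * rhoKQ ρ e k q)
      (w k q) ∧
    (C * (∑ i : Fin N, ∑ j : Fin N, if i < j then u i k * u j q else 0) ≠ 0 →
      ((-C * (∑ i : Fin N, ∑ j : Fin N, if i < j then u i k * u j q else 0)
          + (1 / w k q) * ∑ e ∈ E, (A e : ℝ) * rhoKQ ρ e k q) = 0 ↔
        w k q = (∑ e ∈ E, (A e : ℝ) * rhoKQ ρ e k q)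
          / (C * ∑ i : Fin N, ∑ j : Fin N, if i < j then u i k * u j q else 0))) :=
  stmt_13_general C E A u hu ρ w hw k q
end

section
/- Let u⁰, u¹ ∈ (0,∞)^{N×K} with N ≥ 2, and fix a node j ∈ V with j ≠ 1. If (u⁰₁)^T w (u⁰_j) = (u¹₁)^T w (u¹_j) for every K×K matrix w with nonnegative entries, then for every k ∈ {1,…,K} one has u⁰_{jk} = (u¹_{1k}/u⁰_{1k}) · u¹_{jk}; i.e. the row u⁰_j equals the elementwise (Hadamard) product c ⊙ u¹_j, where c_k := u¹_{1k}/u⁰_{1k}. -/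
/-- If the bilinear forms of node 1 with node `j` agree for every nonnegative affinity
matrix `w`, then row `u⁰_j` is the Hadamard product `c ⊙ u¹_j` with
`c_k = u¹_{1k}/u⁰_{1k}`. -/
theorem stmt_18 {N K : ℕ} (hN : 2 ≤ N)
    (u0 u1 : Fin N → Fin K → ℝ)
    (hu0 : ∀ i k, 0 < u0 i k) (hu1 : ∀ i k, 0 < u1 i k)
    (j : Fin N) (hj : j ≠ (⟨0, by omega⟩ : Fin N))
    (h : ∀ w : Fin K → Fin K → ℝ, (∀ k q, 0 ≤ w k q) →
      (∑ k, ∑ q, u0 (⟨0, by omega⟩ : Fin N) k * w k q * u0 j q)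
        = ∑ k, ∑ q, u1 (⟨0, by omega⟩ : Fin N) k * w k q * u1 j q) :
    ∀ k : Fin K, u0 j k =
      (u1 (⟨0, by omega⟩ : Fin N) k / u0 (⟨0, by omega⟩ : Fin N) k) * u1 j k := by
  intro k0
  set z : Fin N := (⟨0, by omega⟩ : Fin N)
  have key := h (fun k q => (if k = k0 then (1:ℝ) else 0) * (if q = k0 then 1 else 0))
    (by intro k q; positivity)
  simp only [mul_ite, ite_mul, one_mul, zero_mul, mul_one, mul_zero,
    Finset.sum_ite_eq', Finset.mem_univ, if_true] at key
  have h0 : u0 z k0 ≠ 0 := (hu0 z k0).ne'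
  field_simp
  linarith [key]
end
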